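/- arXiv:2311.06257 — 3 statements merged into one kernel-verified Lean document; each statement's English description precedes it below -/
import Mathlib

section
/- (Theorem 3.2(c), Euclidean case.) Let p̄ ∈ F and suppose ψ_u : E → ℝ (u = 1,…,t) are convex at p̄ and directionally differentiable at p̄. Suppose the interval-valued objectives φ_s (s = 1,…,l) are CW-convex at p̄ and weakly directionally differentiable at p̄, and that there exist scalars λ_s^L > 0, λ_s^U > 0 (s = 1,…,l) and μ_u ≥ 0 (u = 1,…,t) such that: (v) λ_s^L < λ_s^U for every s; (vi) for all p ∈ E, Σ_{s=1}^l λ_s^L (φ_s^L)'(p̄; p − p̄) + Σ_{s=1}^l λ_s^U (φ_s^U)'(p̄; p − p̄) + Σ_{u=1}^t μ_u ψ_u'(p̄; p − p̄) ≥ 0; and (vii) μ_u ψ_u(p̄) = 0 for all u. Then p̄ is a type-II Pareto optimal solution of (MIVOP2). -/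
/-! The weighted sum `λᴸ aᴸ + λᵁ aᵁ` equals `(λᴸ + λᵁ) · center + (λᵁ - λᴸ) · half-width`, so for
`|λᴸ| < λᵁ` it is strictly monotone for `<_CW`. Convexity at `p̄` bounds the directional
derivatives towards a point `p̂` by the increments from `p̄` to `p̂`; hence if `φ(p̂) <_CW φ(p̄)`
the objective part of the KKT sum at `p̂ - p̄` is negative, while complementary slackness makes
the constraint part nonpositive, contradicting (vi). -/

/-- One-sided directional derivative of `f` at `p` in direction `w`, with value `d`. -/
def HasDirDeriv {V : Type*} [NormedAddCommGroup V] [NormedSpace ℝ V]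
    (f : V → ℝ) (p w : V) (d : ℝ) : Prop :=
  Filter.Tendsto (fun α : ℝ => (f (p + α • w) - f p) / α)
    (nhdsWithin 0 (Set.Ioi 0)) (nhds d)

/-- `f` is convex at the point `p` (relative to the convex set `E`). -/
def ConvexAtPt {V : Type*} [NormedAddCommGroup V] [NormedSpace ℝ V]
    (E : Set V) (f : V → ℝ) (p : V) : Prop :=
  ∀ q ∈ E, ∀ α : ℝ, 0 ≤ α → α ≤ 1 →
    f ((1 - α) • p + α • q) ≤ (1 - α) * f p + α * f q

/-- `f` (with directional-derivative function `f'` at `pbar`) is pseudo-convex at `pbar`. -/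
def PseudoConvexAt {V : Type*} [NormedAddCommGroup V] [NormedSpace ℝ V]
    (E : Set V) (f : V → ℝ) (f' : V → ℝ) (pbar : V) : Prop :=
  ∀ p ∈ E, f p < f pbar → f' (p - pbar) < 0

/-- `f` (with directional-derivative function `f'` at `pbar`) is strictly
pseudo-convex at `pbar`. -/
def StrictPseudoConvexAt {V : Type*} [NormedAddCommGroup V] [NormedSpace ℝ V]
    (E : Set V) (f : V → ℝ) (f' : V → ℝ) (pbar : V) : Prop :=
  ∀ p ∈ E, p ≠ pbar → f p ≤ f pbar → f' (p - pbar) < 0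

/-- `[aL, aU] ≤_LU [bL, bU]`. -/
def LUle (aL aU bL bU : ℝ) : Prop := aL ≤ bL ∧ aU ≤ bU

/-- `[aL, aU] <_LU [bL, bU]`. -/
def LUlt (aL aU bL bU : ℝ) : Prop := LUle aL aU bL bU ∧ (aL ≠ bL ∨ aU ≠ bU)

/-- `[aL, aU] ≤_CW [bL, bU]`. -/
def CWle (aL aU bL bU : ℝ) : Prop :=
  (aL + aU) / 2 ≤ (bL + bU) / 2 ∧ (aU - aL) / 2 ≤ (bU - bL) / 2

/-- `[aL, aU] <_CW [bL, bU]`. -/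
def CWlt (aL aU bL bU : ℝ) : Prop := CWle aL aU bL bU ∧ (aL ≠ bL ∨ aU ≠ bU)

theorem CWle.weighted_le {aL aU bL bU lamL lamU : ℝ} (h : CWle aL aU bL bU)
    (hlam : |lamL| ≤ lamU) :
    lamL * aL + lamU * aU ≤ lamL * bL + lamU * bU := by
  obtain ⟨hC, hW⟩ := h
  obtain ⟨hlo, hhi⟩ := abs_le.1 hlam
  linarith [mul_le_mul_of_nonneg_left hC (by linarith : 0 ≤ lamL + lamU),
    mul_le_mul_of_nonneg_left hW (by linarith : 0 ≤ lamU - lamL)]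

theorem CWlt.weighted_lt {aL aU bL bU lamL lamU : ℝ} (h : CWlt aL aU bL bU)
    (hlam : |lamL| < lamU) :
    lamL * aL + lamU * aU < lamL * bL + lamU * bU := by
  obtain ⟨⟨hC, hW⟩, hne⟩ := h
  obtain ⟨hlo, hhi⟩ := abs_lt.1 hlam
  have hstrict : (aL + aU) / 2 < (bL + bU) / 2 ∨ (aU - aL) / 2 < (bU - bL) / 2 := by
    by_contra! hcon
    rcases hne with hne | hne <;> exact hne (by linarith)
  have hsum : 0 < lamL + lamU := by linarith
  have hdiff : 0 < lamU - lamL := by linarith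
  rcases hstrict with hstrict | hstrict
  · linarith [mul_lt_mul_of_pos_left hstrict hsum, mul_le_mul_of_nonneg_left hW hdiff.le]
  · linarith [mul_le_mul_of_nonneg_left hC hsum.le, mul_lt_mul_of_pos_left hstrict hdiff]

section DirDeriv

variable {V : Type*} [NormedAddCommGroup V] [NormedSpace ℝ V]
  {f g : V → ℝ} {p w : V} {a b : ℝ}

theorem HasDirDeriv.add (hf : HasDirDeriv f p w a) (hg : HasDirDeriv g p w b) :
    HasDirDeriv (fun x => f x + g x) p w (a + b) :=
  (Filter.Tendsto.add hf hg).congr fun α => by ring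

theorem HasDirDeriv.sub (hf : HasDirDeriv f p w a) (hg : HasDirDeriv g p w b) :
    HasDirDeriv (fun x => f x - g x) p w (a - b) :=
  (Filter.Tendsto.sub hf hg).congr fun α => by ring

theorem HasDirDeriv.div_const (hf : HasDirDeriv f p w a) (c : ℝ) :
    HasDirDeriv (fun x => f x / c) p w (a / c) :=
  (Filter.Tendsto.div_const hf c).congr fun α => by ring

theorem ConvexAtPt.hasDirDeriv_le_sub {E : Set V} {q : V} {d : ℝ} (hc : ConvexAtPt E f p)
    (hq : q ∈ E) (hd : HasDirDeriv f p (q - p) d) :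
    d ≤ f q - f p := by
  refine le_of_tendsto hd ?_
  filter_upwards [Ioo_mem_nhdsGT_of_mem (by norm_num : (0:ℝ) ∈ Set.Ico 0 1)] with α hα
  have hseg : p + α • (q - p) = (1 - α) • p + α • q := by
    rw [smul_sub, sub_smul, one_smul]; abel
  rw [hseg, div_le_iff₀ hα.1]
  nlinarith [hc q hq α hα.1.le hα.2.le]

theorem cwle_hasDirDeriv_of_cw_convex {E : Set V} {fL fU : V → ℝ} {q : V} {dL dU : ℝ}
    (hC : ConvexAtPt E (fun x => (fL x + fU x) / 2) p)
    (hW : ConvexAtPt E (fun x => (fU x - fL x) / 2) p) (hq : q ∈ E)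
    (hL : HasDirDeriv fL p (q - p) dL) (hU : HasDirDeriv fU p (q - p) dU) :
    CWle dL dU (fL q - fL p) (fU q - fU p) := by
  constructor
  · have := hC.hasDirDeriv_le_sub hq ((hL.add hU).div_const 2)
    linarith
  · have := hW.hasDirDeriv_le_sub hq ((hU.sub hL).div_const 2)
    linarith

theorem mul_hasDirDeriv_nonpos_of_convexAtPt {E : Set V} {q : V} {d μ : ℝ}
    (hc : ConvexAtPt E g p) (hq : q ∈ E) (hd : HasDirDeriv g p (q - p) d)
    (hμ : 0 ≤ μ) (hslack : μ * g p = 0) (hgq : g q ≤ 0) :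
    μ * d ≤ 0 :=
  calc μ * d ≤ μ * (g q - g p) := mul_le_mul_of_nonneg_left (hc.hasDirDeriv_le_sub hq hd) hμ
    _ = μ * g q := by rw [mul_sub, hslack, sub_zero]
    _ ≤ 0 := mul_nonpos_of_nonneg_of_nonpos hμ hgq

end DirDeriv

theorem kkt_type_II_CW_convex_LU_multipliers_general
    {V : Type*} [NormedAddCommGroup V] [NormedSpace ℝ V]
    (E : Set V)
    (l t : ℕ) (φL φU : Fin l → V → ℝ) (ψ : Fin t → V → ℝ)
    (pbar : V)
    (φL' φU' : Fin l → V → ℝ)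
    (hφLd : ∀ s w, HasDirDeriv (φL s) pbar w (φL' s w))
    (hφUd : ∀ s w, HasDirDeriv (φU s) pbar w (φU' s w))
    (ψ' : Fin t → V → ℝ)
    (hψd : ∀ u w, HasDirDeriv (ψ u) pbar w (ψ' u w))
    -- CW-convexity of the objectives at `pbar`
    (hφCc : ∀ s, ConvexAtPt E (fun x => (φL s x + φU s x) / 2) pbar)
    (hφWc : ∀ s, ConvexAtPt E (fun x => (φU s x - φL s x) / 2) pbar)
    (hψc : ∀ u, ConvexAtPt E (ψ u) pbar)
    (lamL lamU : Fin l → ℝ) (μ : Fin t → ℝ)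
    (hlamL : ∀ s, 0 < lamL s) (hμ : ∀ u, 0 ≤ μ u)
    (hlamLU : ∀ s, lamL s < lamU s)
    (hkkt : ∀ p ∈ E,
      0 ≤ ∑ s, lamL s * φL' s (p - pbar) + ∑ s, lamU s * φU' s (p - pbar)
          + ∑ u, μ u * ψ' u (p - pbar))
    (hcs : ∀ u, μ u * ψ u pbar = 0) :
    ¬ ∃ phat, (phat ∈ E ∧ ∀ u, ψ u phat ≤ 0) ∧
      (∀ s, CWle (φL s phat) (φU s phat) (φL s pbar) (φU s pbar)) ∧
      (∃ h, CWlt (φL h phat) (φU h phat) (φL h pbar) (φU h pbar)) := by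
  rintro ⟨phat, ⟨hpE, hpF⟩, hle, h, hlt⟩
  have hweight : ∀ s, |lamL s| < lamU s := fun s => (abs_of_pos (hlamL s)).trans_lt (hlamLU s)
  have hobj : ∑ s, (lamL s * φL' s (phat - pbar) + lamU s * φU' s (phat - pbar)) < 0 :=
    calc _ ≤ ∑ s, (lamL s * (φL s phat - φL s pbar) + lamU s * (φU s phat - φU s pbar)) :=
          Finset.sum_le_sum fun s _ =>
            (cwle_hasDirDeriv_of_cw_convex (hφCc s) (hφWc s) hpE (hφLd s _) (hφUd s _)).weighted_le
              (hweight s).le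
      _ < ∑ _s : Fin l, (0 : ℝ) :=
          Finset.sum_lt_sum (fun s _ => by linarith [(hle s).weighted_le (hweight s).le])
            ⟨h, Finset.mem_univ h, by linarith [hlt.weighted_lt (hweight h)]⟩
      _ = 0 := Finset.sum_const_zero
  have hcon : ∑ u, μ u * ψ' u (phat - pbar) ≤ 0 :=
    Finset.sum_nonpos fun u _ =>
      mul_hasDirDeriv_nonpos_of_convexAtPt (hψc u) hpE (hψd u _) (hμ u) (hcs u) (hpF u)
  rw [Finset.sum_add_distrib] at hobj
  linarith [hkkt phat hpE]

/-- Theorem 3.2(c), Euclidean case: CW-convex objectives with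
LU-type KKT multipliers satisfying `λ^L < λ^U` yield a type-II Pareto optimal
solution of (MIVOP2). -/
theorem kkt_type_II_CW_convex_LU_multipliers
    {V : Type*} [NormedAddCommGroup V] [NormedSpace ℝ V]
    (E : Set V) (hEne : E.Nonempty) (hEopen : IsOpen E) (hEconv : Convex ℝ E)
    (l t : ℕ) (φL φU : Fin l → V → ℝ) (ψ : Fin t → V → ℝ)
    (hφint : ∀ s, ∀ x ∈ E, φL s x ≤ φU s x)
    (pbar : V) (hpbarE : pbar ∈ E) (hpbarF : ∀ u, ψ u pbar ≤ 0)
    (φL' φU' : Fin l → V → ℝ)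
    (hφLd : ∀ s w, HasDirDeriv (φL s) pbar w (φL' s w))
    (hφUd : ∀ s w, HasDirDeriv (φU s) pbar w (φU' s w))
    (ψ' : Fin t → V → ℝ)
    (hψd : ∀ u w, HasDirDeriv (ψ u) pbar w (ψ' u w))
    -- CW-convexity of the objectives at `pbar`
    (hφCc : ∀ s, ConvexAtPt E (fun x => (φL s x + φU s x) / 2) pbar)
    (hφWc : ∀ s, ConvexAtPt E (fun x => (φU s x - φL s x) / 2) pbar)
    (hψc : ∀ u, ConvexAtPt E (ψ u) pbar)
    (lamL lamU : Fin l → ℝ) (μ : Fin t → ℝ)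
    (hlamL : ∀ s, 0 < lamL s) (hlamU : ∀ s, 0 < lamU s) (hμ : ∀ u, 0 ≤ μ u)
    (hlamLU : ∀ s, lamL s < lamU s)
    (hkkt : ∀ p ∈ E,
      0 ≤ ∑ s, lamL s * φL' s (p - pbar) + ∑ s, lamU s * φU' s (p - pbar)
          + ∑ u, μ u * ψ' u (p - pbar))
    (hcs : ∀ u, μ u * ψ u pbar = 0) :
    ¬ ∃ phat, (phat ∈ E ∧ ∀ u, ψ u phat ≤ 0) ∧
      (∀ s, CWle (φL s phat) (φU s phat) (φL s pbar) (φU s pbar)) ∧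
      (∃ h, CWlt (φL h phat) (φU h phat) (φL h pbar) (φU h pbar)) :=
  kkt_type_II_CW_convex_LU_multipliers_general E l t φL φU ψ pbar φL' φU' hφLd hφUd ψ' hψd hφCc hφWc
    hψc lamL lamU μ hlamL hμ hlamLU hkkt hcs
end

section
/- (Theorem 3.5(c), Euclidean case.) Let p̄ ∈ F and suppose ψ_u : E → ℝ (u = 1,…,t) are convex at p̄ and directionally differentiable at p̄. Suppose there exists an index c ∈ {1,…,l} such that the interval-valued objective φ_c is CW-convex at p̄ and weakly directionally differentiable at p̄, and there exist scalars λ^L > 0, λ^U > 0 and μ_u ≥ 0 (u = 1,…,t) such that: (v) λ^L < λ^U; (vi) for all p ∈ E, λ^L (φ_c^L)'(p̄; p − p̄) + λ^U (φ_c^U)'(p̄; p − p̄) + Σ_{u=1}^t μ_u ψ_u'(p̄; p − p̄) ≥ 0; and (vii) μ_u ψ_u(p̄) = 0 for all u. Then p̄ is a weakly type-II Pareto optimal solution of (MIVOP2). -/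
/-!
Write `h = λ^L φ_c^L + λ^U φ_c^U`. Since `h = (λ^L + λ^U) φ_c^C + (λ^U - λ^L) φ_c^W` with both
coefficients positive, `h` is convex at `p̄` and a point `p̂` that beats `p̄` in the CW order on
`φ_c` has `h p̂ < h p̄`. Convexity bounds directional derivatives by secants, so the objective part
of the KKT expression at `p̂ - p̄` is negative, while complementary slackness and feasibility of
`p̂` make every constraint term `μ_u ψ_u'(p̄; p̂ - p̄) ≤ μ_u ψ_u(p̂)` nonpositive.
-/

section DirDeriv

variable {V : Type*} [NormedAddCommGroup V] [NormedSpace ℝ V]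

theorem HasDirDeriv.linear_comb {f g : V → ℝ} {p w : V} {df dg : ℝ}
    (hf : HasDirDeriv f p w df) (hg : HasDirDeriv g p w dg) (a b : ℝ) :
    HasDirDeriv (fun x => a * f x + b * g x) p w (a * df + b * dg) :=
  ((hf.const_mul a).add (hg.const_mul b)).congr fun α => by ring

theorem ConvexAtPt.linear_comb {E : Set V} {f g : V → ℝ} {p : V}
    (hf : ConvexAtPt E f p) (hg : ConvexAtPt E g p) {a b : ℝ} (ha : 0 ≤ a) (hb : 0 ≤ b) :
    ConvexAtPt E (fun x => a * f x + b * g x) p := fun q hq α hα0 hα1 => by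
  linarith [mul_le_mul_of_nonneg_left (hf q hq α hα0 hα1) ha,
    mul_le_mul_of_nonneg_left (hg q hq α hα0 hα1) hb]

theorem HasDirDeriv.le_sub_of_convexAtPt {E : Set V} {f : V → ℝ} {p q : V} {d : ℝ}
    (hd : HasDirDeriv f p (q - p) d) (hf : ConvexAtPt E f p) (hq : q ∈ E) :
    d ≤ f q - f p := by
  refine le_of_tendsto hd ?_
  filter_upwards [Ioc_mem_nhdsGT_of_mem (show (0 : ℝ) ∈ Set.Ico 0 1 by norm_num)]
    with α ⟨hα0, hα1⟩
  have hsegment : p + α • (q - p) = (1 - α) • p + α • q := by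
    rw [smul_sub, sub_smul, one_smul]; abel
  have hconv := hf q hq α hα0.le hα1
  rw [← hsegment] at hconv
  rw [div_le_iff₀ hα0]
  linarith

end DirDeriv

theorem CWlt.mul_add_mul_lt {xL xU yL yU a b : ℝ} (h : CWlt xL xU yL yU)
    (ha : 0 < a) (hab : a < b) :
    a * xL + b * xU < a * yL + b * yU := by
  obtain ⟨⟨hC, hW⟩, hne⟩ := h
  by_contra! hge
  have hCeq : xL + xU = yL + yU := by nlinarith
  have hWeq : xU - xL = yU - yL := by nlinarith
  rcases hne with hL | hU
  · exact hL (by linarith)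
  · exact hU (by linarith)

theorem kkt_weak_type_II_CW_convex_LU_multipliers_general
    {V : Type*} [NormedAddCommGroup V] [NormedSpace ℝ V]
    (E : Set V)
    (l t : ℕ) (φL φU : Fin l → V → ℝ) (ψ : Fin t → V → ℝ)
    (pbar : V)
    (ψ' : Fin t → V → ℝ)
    (hψd : ∀ u w, HasDirDeriv (ψ u) pbar w (ψ' u w))
    (hψc : ∀ u, ConvexAtPt E (ψ u) pbar)
    (c : Fin l)
    (φcL' φcU' : V → ℝ)
    (hφLd : ∀ w, HasDirDeriv (φL c) pbar w (φcL' w))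
    (hφUd : ∀ w, HasDirDeriv (φU c) pbar w (φcU' w))
    -- CW-convexity of `φ_c` at `pbar`
    (hφCc : ConvexAtPt E (fun x => (φL c x + φU c x) / 2) pbar)
    (hφWc : ConvexAtPt E (fun x => (φU c x - φL c x) / 2) pbar)
    (lamL lamU : ℝ) (μ : Fin t → ℝ)
    (hlamL : 0 < lamL) (hμ : ∀ u, 0 ≤ μ u)
    (hlamLU : lamL < lamU)
    (hkkt : ∀ p ∈ E,
      0 ≤ lamL * φcL' (p - pbar) + lamU * φcU' (p - pbar)
          + ∑ u, μ u * ψ' u (p - pbar))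
    (hcs : ∀ u, μ u * ψ u pbar = 0) :
    ¬ ∃ phat, (phat ∈ E ∧ ∀ u, ψ u phat ≤ 0) ∧
      (∀ s, CWlt (φL s phat) (φU s phat) (φL s pbar) (φU s pbar)) := by
  rintro ⟨phat, ⟨hphatE, hphatF⟩, hlt⟩
  have hconv : ConvexAtPt E (fun x => lamL * φL c x + lamU * φU c x) pbar := by
    convert hφCc.linear_comb hφWc (by linarith : 0 ≤ lamL + lamU) (sub_nonneg.2 hlamLU.le)
      using 2
    ring
  have hobjective : lamL * φcL' (phat - pbar) + lamU * φcU' (phat - pbar) < 0 :=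
    calc _ ≤ (lamL * φL c phat + lamU * φU c phat) - (lamL * φL c pbar + lamU * φU c pbar) :=
          ((hφLd _).linear_comb (hφUd _) lamL lamU).le_sub_of_convexAtPt hconv hphatE
      _ < 0 := sub_neg.2 ((hlt c).mul_add_mul_lt hlamL hlamLU)
  have hconstraints : ∑ u, μ u * ψ' u (phat - pbar) ≤ 0 := by
    refine Finset.sum_nonpos fun u _ => ?_
    calc μ u * ψ' u (phat - pbar) ≤ μ u * (ψ u phat - ψ u pbar) :=
          mul_le_mul_of_nonneg_left ((hψd u _).le_sub_of_convexAtPt (hψc u) hphatE) (hμ u)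
      _ = μ u * ψ u phat := by rw [mul_sub, hcs u, sub_zero]
      _ ≤ 0 := mul_nonpos_of_nonneg_of_nonpos (hμ u) (hphatF u)
  linarith [hkkt phat hphatE]

/-- Theorem 3.5(c), Euclidean case: KKT sufficiency, via a single
CW-convex objective `φ_c` with LU multipliers `λ^L < λ^U`, for weakly type-II
Pareto optimal solutions. -/
theorem kkt_weak_type_II_CW_convex_LU_multipliers
    {V : Type*} [NormedAddCommGroup V] [NormedSpace ℝ V]
    (E : Set V) (hEne : E.Nonempty) (hEopen : IsOpen E) (hEconv : Convex ℝ E)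
    (l t : ℕ) (φL φU : Fin l → V → ℝ) (ψ : Fin t → V → ℝ)
    (hφint : ∀ s, ∀ x ∈ E, φL s x ≤ φU s x)
    (pbar : V) (hpbarE : pbar ∈ E) (hpbarF : ∀ u, ψ u pbar ≤ 0)
    (ψ' : Fin t → V → ℝ)
    (hψd : ∀ u w, HasDirDeriv (ψ u) pbar w (ψ' u w))
    (hψc : ∀ u, ConvexAtPt E (ψ u) pbar)
    (c : Fin l)
    (φcL' φcU' : V → ℝ)
    (hφLd : ∀ w, HasDirDeriv (φL c) pbar w (φcL' w))
    (hφUd : ∀ w, HasDirDeriv (φU c) pbar w (φcU' w))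
    -- CW-convexity of `φ_c` at `pbar`
    (hφCc : ConvexAtPt E (fun x => (φL c x + φU c x) / 2) pbar)
    (hφWc : ConvexAtPt E (fun x => (φU c x - φL c x) / 2) pbar)
    (lamL lamU : ℝ) (μ : Fin t → ℝ)
    (hlamL : 0 < lamL) (hlamU : 0 < lamU) (hμ : ∀ u, 0 ≤ μ u)
    (hlamLU : lamL < lamU)
    (hkkt : ∀ p ∈ E,
      0 ≤ lamL * φcL' (p - pbar) + lamU * φcU' (p - pbar)
          + ∑ u, μ u * ψ' u (p - pbar))
    (hcs : ∀ u, μ u * ψ u pbar = 0) :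
    ¬ ∃ phat, (phat ∈ E ∧ ∀ u, ψ u phat ≤ 0) ∧
      (∀ s, CWlt (φL s phat) (φU s phat) (φL s pbar) (φU s pbar)) :=
  kkt_weak_type_II_CW_convex_LU_multipliers_general E l t φL φU ψ pbar ψ' hψd hψc c φcL' φcU' hφLd
    hφUd hφCc hφWc lamL lamU μ hlamL hμ hlamLU hkkt hcs
end

section
/- (Theorem 3.6(b), Euclidean case.) Let p̄ ∈ F, let each ψ_u (u = 1,…,t) be directionally differentiable at p̄, and assume ψ_u is strictly pseudo-convex at p̄ for every active index u ∈ J(p̄). Suppose there exists an index c ∈ {1,…,l} such that the interval-valued objective φ_c, defined on the nonempty open convex set E, is weakly directionally differentiable at p̄ and CW-pseudo-convex at p̄, and that for every feasible point p ∈ F there exist scalars μ_u^C ≥ 0, μ_u^W ≥ 0 (u = 1,…,t), possibly depending on p, such that: (iv) (φ_c^C)'(p̄; p − p̄) + Σ_{u=1}^t μ_u^C ψ_u'(p̄; p − p̄) ≥ 0; (v) (φ_c^W)'(p̄; p − p̄) + Σ_{u=1}^t μ_u^W ψ_u'(p̄; p − p̄) ≥ 0; and (vi) μ_u^C ψ_u(p̄)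 = 0 = μ_u^W ψ_u(p̄) for all u. Then p̄ is a weakly type-II Pareto optimal solution of (MIVOP2). -/
/-! Suppose a feasible `p̂` had `φ_c(p̂) <_CW φ_c(p̄)`, so `p̂ ≠ p̄`. By complementary slackness
only active constraints carry multipliers, and for those strict pseudo-convexity together with
`ψ_u(p̂) ≤ 0 = ψ_u(p̄)` gives `ψ_u'(p̄; p̂ - p̄) < 0`; hence both multiplier sums in (iv), (v) are
nonpositive and the directional derivatives of `φ_c^C` and `φ_c^W` towards `p̂` are nonnegative.
Pseudo-convexity then yields `φ_c^C(p̄) ≤ φ_c^C(p̂)` and `φ_c^W(p̄) ≤ φ_c^W(p̂)`, whereas a strict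
CW-decrease lowers the center or the width strictly. -/

theorem not_CWlt_self (aL aU : ℝ) : ¬ CWlt aL aU aL aU := fun h => by
  rcases h.2 with h | h <;> exact h rfl

theorem CWlt.center_lt_or_width_lt {aL aU bL bU : ℝ} (h : CWlt aL aU bL bU) :
    (aL + aU) / 2 < (bL + bU) / 2 ∨ (aU - aL) / 2 < (bU - bL) / 2 := by
  obtain ⟨⟨hcenter, hwidth⟩, hne⟩ := h
  by_contra! hge
  rcases hne with hne | hne <;> apply hne <;> linarith [hge.1, hge.2]

section

variable {V : Type*} [NormedAddCommGroup V] [NormedSpace ℝ V]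

theorem PseudoConvexAt.le_of_dirDeriv_nonneg {E : Set V} {f f' : V → ℝ} {pbar p : V}
    (hf : PseudoConvexAt E f f' pbar) (hp : p ∈ E) (hf' : 0 ≤ f' (p - pbar)) :
    f pbar ≤ f p :=
  not_lt.mp fun hlt => (hf p hp hlt).not_ge hf'

theorem sum_mul_dirDeriv_nonpos_of_complementary_slackness {ι : Type*} [Fintype ι]
    {E : Set V} {ψ ψ' : ι → V → ℝ} {μ : ι → ℝ} {pbar p : V}
    (hpbar : ∀ u, ψ u pbar ≤ 0)
    (hψ : ∀ u, ψ u pbar = 0 → StrictPseudoConvexAt E (ψ u) (ψ' u) pbar)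
    (hpE : p ∈ E) (hp : ∀ u, ψ u p ≤ 0) (hne : p ≠ pbar)
    (hμ : ∀ u, 0 ≤ μ u) (hslack : ∀ u, μ u * ψ u pbar = 0) :
    ∑ u, μ u * ψ' u (p - pbar) ≤ 0 := by
  refine Finset.sum_nonpos fun u _ => ?_
  rcases (hpbar u).lt_or_eq with hinactive | hactive
  · have hμu : μ u = 0 := (mul_eq_zero.mp (hslack u)).resolve_right hinactive.ne
    simp only [hμu, zero_mul, le_refl]
  · have hderiv := hψ u hactive p hpE hne (hactive ▸ hp u)
    exact mul_nonpos_of_nonneg_of_nonpos (hμ u) hderiv.le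

end

theorem kkt_weak_type_II_CW_pseudoconvex_general
    {V : Type*} [NormedAddCommGroup V] [NormedSpace ℝ V]
    (E : Set V)
    (l t : ℕ) (φL φU : Fin l → V → ℝ) (ψ : Fin t → V → ℝ)
    (pbar : V) (hpbarF : ∀ u, ψ u pbar ≤ 0)
    (ψ' : Fin t → V → ℝ)
    -- strict pseudo-convexity of the active constraints at `pbar`
    (hψspc : ∀ u, ψ u pbar = 0 → StrictPseudoConvexAt E (ψ u) (ψ' u) pbar)
    (c : Fin l)
    (φcL' φcU' : V → ℝ)
    -- CW-pseudo-convexity of `φ_c` at `pbar`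
    (hφCpc : PseudoConvexAt E (fun x => (φL c x + φU c x) / 2)
      (fun w => (φcL' w + φcU' w) / 2) pbar)
    (hφWpc : PseudoConvexAt E (fun x => (φU c x - φL c x) / 2)
      (fun w => (φcU' w - φcL' w) / 2) pbar)
    -- multipliers, possibly depending on the feasible point `p`
    (hkkt : ∀ p, p ∈ E → (∀ u, ψ u p ≤ 0) →
      ∃ μC μW : Fin t → ℝ,
        (∀ u, 0 ≤ μC u) ∧ (∀ u, 0 ≤ μW u) ∧
        0 ≤ (φcL' (p - pbar) + φcU' (p - pbar)) / 2
            + ∑ u, μC u * ψ' u (p - pbar) ∧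
        0 ≤ (φcU' (p - pbar) - φcL' (p - pbar)) / 2
            + ∑ u, μW u * ψ' u (p - pbar) ∧
        (∀ u, μC u * ψ u pbar = 0 ∧ μW u * ψ u pbar = 0)) :
    ¬ ∃ phat, (phat ∈ E ∧ ∀ u, ψ u phat ≤ 0) ∧
      (∀ s, CWlt (φL s phat) (φU s phat) (φL s pbar) (φU s pbar)) := by
  rintro ⟨phat, ⟨hpE, hpF⟩, hlt⟩
  have hne : phat ≠ pbar := by
    rintro rfl
    exact not_CWlt_self _ _ (hlt c)
  obtain ⟨μC, μW, hμC, hμW, hC, hW, hslack⟩ := hkkt phat hpE hpF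
  have hsumC := sum_mul_dirDeriv_nonpos_of_complementary_slackness hpbarF hψspc hpE hpF hne
    hμC fun u => (hslack u).1
  have hsumW := sum_mul_dirDeriv_nonpos_of_complementary_slackness hpbarF hψspc hpE hpF hne
    hμW fun u => (hslack u).2
  have hcenter := hφCpc.le_of_dirDeriv_nonneg hpE (by linarith)
  have hwidth := hφWpc.le_of_dirDeriv_nonneg hpE (by linarith)
  rcases (hlt c).center_lt_or_width_lt with h | h
  · exact h.not_ge hcenter
  · exact h.not_ge hwidth

/-- Theorem 3.6(b), Euclidean case: KKT sufficiency, via a single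
CW-pseudo-convex objective `φ_c`, for weakly type-II Pareto optimal solutions. -/
theorem kkt_weak_type_II_CW_pseudoconvex
    {V : Type*} [NormedAddCommGroup V] [NormedSpace ℝ V]
    (E : Set V) (hEne : E.Nonempty) (hEopen : IsOpen E) (hEconv : Convex ℝ E)
    (l t : ℕ) (φL φU : Fin l → V → ℝ) (ψ : Fin t → V → ℝ)
    (hφint : ∀ s, ∀ x ∈ E, φL s x ≤ φU s x)
    (pbar : V) (hpbarE : pbar ∈ E) (hpbarF : ∀ u, ψ u pbar ≤ 0)
    (ψ' : Fin t → V → ℝ)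
    (hψd : ∀ u w, HasDirDeriv (ψ u) pbar w (ψ' u w))
    -- strict pseudo-convexity of the active constraints at `pbar`
    (hψspc : ∀ u, ψ u pbar = 0 → StrictPseudoConvexAt E (ψ u) (ψ' u) pbar)
    (c : Fin l)
    (φcL' φcU' : V → ℝ)
    (hφLd : ∀ w, HasDirDeriv (φL c) pbar w (φcL' w))
    (hφUd : ∀ w, HasDirDeriv (φU c) pbar w (φcU' w))
    -- CW-pseudo-convexity of `φ_c` at `pbar`
    (hφCpc : PseudoConvexAt E (fun x => (φL c x + φU c x) / 2)
      (fun w => (φcL' w + φcU' w) / 2) pbar)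
    (hφWpc : PseudoConvexAt E (fun x => (φU c x - φL c x) / 2)
      (fun w => (φcU' w - φcL' w) / 2) pbar)
    -- multipliers, possibly depending on the feasible point `p`
    (hkkt : ∀ p, p ∈ E → (∀ u, ψ u p ≤ 0) →
      ∃ μC μW : Fin t → ℝ,
        (∀ u, 0 ≤ μC u) ∧ (∀ u, 0 ≤ μW u) ∧
        0 ≤ (φcL' (p - pbar) + φcU' (p - pbar)) / 2
            + ∑ u, μC u * ψ' u (p - pbar) ∧
        0 ≤ (φcU' (p - pbar) - φcL' (p - pbar)) / 2
            + ∑ u, μW u * ψ' u (p - pbar) ∧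
        (∀ u, μC u * ψ u pbar = 0 ∧ μW u * ψ u pbar = 0)) :
    ¬ ∃ phat, (phat ∈ E ∧ ∀ u, ψ u phat ≤ 0) ∧
      (∀ s, CWlt (φL s phat) (φU s phat) (φL s pbar) (φU s pbar)) :=
  kkt_weak_type_II_CW_pseudoconvex_general E l t φL φU ψ pbar hpbarF ψ' hψspc c φcL' φcU' hφCpc
    hφWpc hkkt
end
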